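/- arXiv:2111.11109 — 2 statements merged into one kernel-verified Lean document; each statement's English description precedes it below -/
import Mathlib

section
/- Assume B is Gorenstein. Then for every finitely generated B-module X that is free as an O-module: (a) the natural evaluation map X → X^◇◇ = Hom_B(Hom_B(X,B),B) is bijective; and (b) for every idempotent e of C, the map (Xe)^◇ → (X^◇)^e sending θ to the functional x ↦ θ((1⊗x)e) is a well-defined bijection, with inverse sending φ to the functional (1⊗x)e ↦ φ(x). -/
/-!
Statement 5.  Let `O` be a discrete valuation ring with fraction field `F`, let `B` be a
commutative `O`-algebra that is finitely generated and free as an `O`-module, and let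
`C := F ⊗_O B` (encoded as the localization of `B` at the image of the nonzero elements
of `O`).  `B` is Gorenstein if `Hom_O(B,O)` is a projective `B`-module, where `B` acts on
`Hom_O(B,O)` by `(b • θ) (x) = θ (b * x)`.

Assume `B` is Gorenstein.  Then for every finitely generated `B`-module `X` that is free as
an `O`-module:
(a) the natural evaluation map `X → X^◇◇ = Hom_B(Hom_B(X,B),B)` is bijective; and
(b) for every idempotent `e` of `C`, the map `(Xe)^◇ → (X^◇)^e` sending `θ` to the
functional `x ↦ θ ((1 ⊗ x) e)` is a well-defined bijection (here `Xe` is the `B`-submodule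
`{(1 ⊗ x) e : x ∈ X}` of `C ⊗_B X` and `X^e := {x : X | e • (1 ⊗ x) = 1 ⊗ x}`).
-/

set_option linter.unusedSectionVars false

noncomputable section

open TensorProduct

variable (O : Type) [CommRing O] [IsDomain O] [IsDiscreteValuationRing O]
variable (B : Type) [CommRing B] [Algebra O B] [Module.Finite O B] [Module.Free O B]
variable (C : Type) [CommRing C] [Algebra B C]
  [IsLocalization (Algebra.algebraMapSubmonoid B (nonZeroDivisors O)) C]

/-- The action of `B` on `Hom_O(B, O)` given by `(b • θ) (x) = θ (b * x)`. -/
instance dualSMul : SMul B (Module.Dual O B) :=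
  ⟨fun b θ => θ.comp (LinearMap.mul O B b)⟩

lemma dualSMul_apply (b : B) (θ : Module.Dual O B) (x : B) : (b • θ) x = θ (b * x) := rfl

/-- `Hom_O(B, O)` as a `B`-module, via `(b • θ) (x) = θ (b * x)`. -/
instance dualModule : Module B (Module.Dual O B) where
  one_smul θ := by ext x; simp [dualSMul_apply]
  mul_smul b c θ := by
    ext x; simp only [dualSMul_apply]; rw [mul_left_comm, ← mul_assoc]
  smul_zero b := by ext x; simp [dualSMul_apply]
  smul_add b θ₁ θ₂ := by ext x; simp [dualSMul_apply]
  add_smul b c θ := by ext x; simp [dualSMul_apply, add_mul]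
  zero_smul θ := by ext x; simp [dualSMul_apply]

/-- `B` is a Gorenstein `O`-order: the dual `Hom_O(B,O)` is projective over `B`. -/
def IsGorensteinOrder : Prop := Module.Projective B (Module.Dual O B)

variable (X : Type) [AddCommGroup X] [Module B X]

/-- The canonical map `X → C ⊗_B X`, `x ↦ 1 ⊗ x`. -/
def oneTensor : X →ₗ[B] C ⊗[B] X := TensorProduct.mk B C X 1

/-- The map `X → C ⊗_B X`, `x ↦ e • (1 ⊗ x) = (1 ⊗ x) e`. -/
def eTensor (e : C) : X →ₗ[B] C ⊗[B] X :=
  ((LinearMap.lsmul C (C ⊗[B] X) e).restrictScalars B).comp (oneTensor B C X)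

/-- `Xe := {(1 ⊗ x) e : x ∈ X} ⊆ C ⊗_B X`. -/
def eSub (e : C) : Submodule B (C ⊗[B] X) := LinearMap.range (eTensor B C X e)

/-- `X^e := {x : X | e • (1 ⊗ x) = 1 ⊗ x}`. -/
def supE (e : C) : Submodule B X := LinearMap.ker (eTensor B C X e - oneTensor B C X)

/-- The map `(Xe)^◇ → X^◇` given by `θ ↦ (x ↦ θ ((1 ⊗ x) e))`. -/
def dualMapE (e : C) : (↥(eSub B C X e) →ₗ[B] B) → (X →ₗ[B] B) :=
  fun θ => θ.comp (eTensor B C X e).rangeRestrict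

/-!
Restriction of scalars is left adjoint to coinduction, so `Hom_B(X, D) ≅ Hom_O(X, O)` for
`D := Hom_O(B, O)`. As `D` is a direct summand of some `Bⁿ`, every `Φ ∈ X^◇◇` extends to a
`B`-linear map `Hom_B(X, D) → D`; through the adjunction this is an element of the `O`-bidual
of `X`, i.e. evaluation at some `x ∈ X`. Since `D` is a faithful `B`-module, `Φ` is then
evaluation at `x` as well.

For (b) write `e = b / s` with `s` the image of a nonzero element of `O`. As `X` and `X^◇` have
no `O`-torsion, `(1 ⊗ x) e = 0` iff `b x = 0`, and `f ∈ (X^◇)^e` iff `b f = s f`. The functionals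
on `Xe` are those on `X` vanishing on `ker (x ↦ (1 ⊗ x) e)`, and idempotency of `e` gives
`b (b - s) = 0`, which identifies these with the `f` satisfying `b f = s f`.
-/

section ProjectiveCodomain

variable {R M P : Type*} [CommRing R] [AddCommGroup M] [Module R M] [AddCommGroup P] [Module R P]
  [Module.Projective R P]

theorem LinearMap.apply_eq_zero_of_forall_dual_apply_eq_zero {x : M}
    (hx : ∀ φ : Module.Dual R M, φ x = 0) (f : M →ₗ[R] P) : f x = 0 :=
  (Module.forall_dual_apply_eq_zero_iff R (f x)).mp fun ψ => hx (ψ ∘ₗ f)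

theorem exists_linearMap_apply_smulRight [Module.Finite R P]
    (Φ : Module.Dual R (Module.Dual R M)) :
    ∃ H : (M →ₗ[R] P) →ₗ[R] P,
      ∀ (φ : Module.Dual R M) (d : P), H (φ.smulRight d) = Φ φ • d := by
  -- `P` is a direct summand of some `Rⁿ`, on which `Φ` extends coordinatewise.
  obtain ⟨n, p, hp⟩ := Module.Finite.exists_fin' R P
  obtain ⟨i, hi⟩ := Module.projective_lifting_property p LinearMap.id hp
  refine ⟨p ∘ₗ LinearMap.pi fun j => Φ ∘ₗ LinearMap.llcomp R M P R (LinearMap.proj j ∘ₗ i),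
    fun φ d => ?_⟩
  have hcoord : (fun j => Φ ((LinearMap.proj j ∘ₗ i) ∘ₗ φ.smulRight d)) = Φ φ • i d := by
    ext j
    have : (LinearMap.proj j ∘ₗ i) ∘ₗ φ.smulRight d = i d j • φ := by
      ext x
      simp [mul_comm]
    simp [this, mul_comm]
  calc p (fun j => Φ ((LinearMap.proj j ∘ₗ i) ∘ₗ φ.smulRight d)) = p (Φ φ • i d) := by
        rw [hcoord]
    _ = Φ φ • d := by rw [map_smul, ← LinearMap.comp_apply p i, hi, LinearMap.id_apply]

end ProjectiveCodomain

section CoinducedDual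

variable {R A M : Type} [CommRing R] [CommRing A] [Algebra R A]

instance : IsScalarTower R A (Module.Dual R A) :=
  ⟨fun r a θ => LinearMap.ext fun x => by
    show θ ((r • a) * x) = r • θ (a * x)
    rw [smul_mul_assoc, map_smul]⟩

instance : SMulCommClass A R (Module.Dual R A) :=
  ⟨fun _ _ _ => rfl⟩

@[simp]
lemma Module.Dual.algebra_smul_apply (a : A) (θ : Module.Dual R A) (x : A) :
    (a • θ) x = θ (a * x) :=
  rfl

instance [Module.Projective R A] : FaithfulSMul A (Module.Dual R A) where
  eq_of_smul_eq_smul {a a'} h := by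
    rw [← sub_eq_zero, ← Module.forall_dual_apply_eq_zero_iff R]
    intro θ
    simpa [sub_eq_zero] using congr($(h θ) 1)

variable [AddCommGroup M] [Module A M] [Module R M] [IsScalarTower R A M]

def dualEquivHomDual : Module.Dual R M ≃ₗ[R] (M →ₗ[A] Module.Dual R A) where
  toFun g :=
    { toFun x := g ∘ₗ (LinearMap.toSpanSingleton A M x).restrictScalars R
      map_add' x y := by ext; simp
      map_smul' a x := by ext b; simp [smul_smul, mul_comm] }
  map_add' g g' := rfl
  map_smul' r g := rfl
  invFun f := LinearMap.applyₗ (1 : A) ∘ₗ f.restrictScalars R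
  left_inv g := by ext; simp
  right_inv f := by ext; simp

@[simp]
lemma dualEquivHomDual_apply_apply (g : Module.Dual R M) (x : M) (a : A) :
    dualEquivHomDual g x a = g (a • x) :=
  rfl

@[simp]
lemma dualEquivHomDual_symm_apply (f : M →ₗ[A] Module.Dual R A) (x : M) :
    dualEquivHomDual.symm f x = f x 1 :=
  rfl

theorem exists_forall_eq_apply_of_isReflexive [Module.IsReflexive R M]
    (H : (M →ₗ[A] Module.Dual R A) →ₗ[A] Module.Dual R A) : ∃ x : M, ∀ f, H f = f x := by
  obtain ⟨x, hx⟩ := (Module.bijective_dual_eval R M).surjective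
    (LinearMap.applyₗ (1 : A) ∘ₗ H.restrictScalars R ∘ₗ dualEquivHomDual.toLinearMap)
  refine ⟨x, fun f => LinearMap.ext fun a => ?_⟩
  calc H f a = H (a • f) 1 := by simp
    _ = dualEquivHomDual.symm (a • f) x := by
      simpa using congr($hx (dualEquivHomDual.symm (a • f))).symm
    _ = f x a := by simp

theorem Module.IsReflexive.of_projective_dual [Module.Finite R A] [Module.Projective R A]
    [Module.Projective A (Module.Dual R A)] [Module.IsReflexive R M] :
    Module.IsReflexive A M := by
  have : Module.Finite A (Module.Dual R A) := .of_restrictScalars_finite R A _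
  refine ⟨⟨(injective_iff_map_eq_zero _).mpr fun x hx => ?_, fun Φ => ?_⟩⟩
  · have hφ (φ : Module.Dual A M) : φ x = 0 := congr($hx φ)
    refine (Module.bijective_dual_eval R M).injective (LinearMap.ext fun g => ?_)
    simpa using
      congr($(LinearMap.apply_eq_zero_of_forall_dual_apply_eq_zero hφ (dualEquivHomDual g)) 1)
  · obtain ⟨H, hH⟩ := exists_linearMap_apply_smulRight (P := Module.Dual R A) Φ
    obtain ⟨x, hx⟩ := exists_forall_eq_apply_of_isReflexive H
    refine ⟨x, LinearMap.ext fun φ =>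
      FaithfulSMul.eq_of_smul_eq_smul (α := Module.Dual R A) fun d => ?_⟩
    simpa using (hx (φ.smulRight d)).symm.trans (hH φ d)

end CoinducedDual

theorem isSMulRegular_of_mem_algebraMapSubmonoid {R A : Type*} (M : Type*) [CommRing R]
    [CommRing A] [Algebra R A] [AddCommGroup M] [Module R M] [Module A M] [IsScalarTower R A M]
    [Module.IsTorsionFree R M] {a : A}
    (ha : a ∈ Algebra.algebraMapSubmonoid A (nonZeroDivisors R)) : IsSMulRegular M a := by
  obtain ⟨r, hr, rfl⟩ := ha
  exact (isSMulRegular_algebraMap_iff A).mpr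
    (isRegular_iff_mem_nonZeroDivisors.mpr hr).isSMulRegular

theorem Submodule.mem_dualAnnihilator_torsionBy_iff {A M : Type*} [CommRing A] [AddCommGroup M]
    [Module A M] {b s : A} (hbs : b * b = b * s) (hs : IsSMulRegular A s)
    (f : Module.Dual A M) :
    f ∈ (Submodule.torsionBy A M b).dualAnnihilator ↔ b • f = s • f := by
  simp only [Submodule.mem_dualAnnihilator, Submodule.mem_torsionBy_iff]
  constructor
  · intro hf
    ext m
    have hker : b • (b - s) • m = 0 := by rw [smul_smul, mul_sub, hbs, sub_self, zero_smul]
    simpa [sub_smul, sub_eq_zero] using hf _ hker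
  · intro hf m hm
    apply hs
    calc s • f m = b • f m := congr($hf m).symm
      _ = s • 0 := by rw [← map_smul, hm, map_zero, smul_zero]

section BaseChange

variable {A L M : Type} [CommRing A] [CommRing L] [Algebra A L] [AddCommGroup M] [Module A M]

lemma eTensor_apply (e : L) (m : M) : eTensor A L M e m = e • oneTensor A L M m :=
  rfl

theorem dualMapE_injective (e : L) : Function.Injective (dualMapE A L M e) :=
  LinearMap.dualMap_injective_of_surjective (LinearMap.surjective_rangeRestrict _)

theorem range_dualMapE (e : L) :
    Set.range (dualMapE A L M e) =
      ((LinearMap.ker (eTensor A L M e)).dualAnnihilator : Set (M →ₗ[A] A)) := by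
  have := LinearMap.range_dualMap_eq_dualAnnihilator_ker_of_surjective
    (M' := eSub A L M e) (eTensor A L M e).rangeRestrict (LinearMap.surjective_rangeRestrict _)
  convert congr(SetLike.coe $this) using 3
  · exact (LinearMap.coe_range (eTensor A L M e).rangeRestrict.dualMap).symm
  · exact (LinearMap.ker_rangeRestrict _).symm

variable {S : Submonoid A} [IsLocalization S L]

theorem oneTensor_injective (hM : ∀ s ∈ S, IsSMulRegular M s) :
    Function.Injective (oneTensor A L M) := by
  have : IsLocalizedModule S (oneTensor A L M) :=
    (isLocalizedModule_iff_isBaseChange S L _).mpr (TensorProduct.isBaseChange A M L)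
  refine (injective_iff_map_eq_zero _).mpr fun m hm => ?_
  obtain ⟨s, hs⟩ := (IsLocalizedModule.eq_zero_iff S _).mp hm
  exact hM s s.2 (hs.trans (smul_zero _).symm)

theorem algebraMap_smul_eTensor_mk' (b : A) (s : S) (m : M) :
    algebraMap A L s • eTensor A L M (IsLocalization.mk' L b s) m = oneTensor A L M (b • m) := by
  rw [eTensor_apply, smul_smul, mul_comm, IsLocalization.mk'_spec, algebraMap_smul, map_smul]

theorem ker_eTensor_mk' (hM : ∀ s ∈ S, IsSMulRegular M s) (b : A) (s : S) :
    LinearMap.ker (eTensor A L M (IsLocalization.mk' L b s)) = Submodule.torsionBy A M b := by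
  ext m
  rw [LinearMap.mem_ker, Submodule.mem_torsionBy_iff,
    ← (IsLocalization.map_units L s).smul_eq_zero, algebraMap_smul_eTensor_mk',
    (injective_iff_map_eq_zero' _).mp (oneTensor_injective hM)]

theorem mem_supE_mk'_iff (hM : ∀ s ∈ S, IsSMulRegular M s) (b : A) (s : S) (m : M) :
    m ∈ supE A L M (IsLocalization.mk' L b s) ↔ b • m = (s : A) • m := by
  rw [supE, LinearMap.mem_ker, LinearMap.sub_apply, sub_eq_zero,
    ← (IsLocalization.map_units L s).smul_left_cancel, algebraMap_smul_eTensor_mk',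
    algebraMap_smul, ← map_smul, (oneTensor_injective hM).eq_iff]

theorem mul_self_eq_mul_of_isIdempotentElem_mk' (hA : ∀ s ∈ S, IsSMulRegular A s) {b : A}
    {s : S} (he : IsIdempotentElem (IsLocalization.mk' L b s)) : b * b = b * s := by
  have hL : algebraMap A L (b * b) = algebraMap A L (b * s) := by
    rw [map_mul, map_mul, ← IsLocalization.mk'_spec L b s]
    linear_combination algebraMap A L s ^ 2 * he.eq
  obtain ⟨c, hc⟩ := (IsLocalization.eq_iff_exists S L).mp hL
  exact hA c c.2 hc

end BaseChange

theorem gorenstein_duality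
    (hGor : IsGorensteinOrder O B)
    [Module.Finite B X] [Module O X] [IsScalarTower O B X] [Module.Free O X]
    (e : C) (he : IsIdempotentElem e) :
    Function.Bijective (Module.Dual.eval B X) ∧
      Function.Injective (dualMapE B C X e) ∧
        Set.range (dualMapE B C X e) = (supE B C (X →ₗ[B] B) e : Set (X →ₗ[B] B)) := by
  have : Module.Projective B (Module.Dual O B) := hGor
  have : Module.Finite O X := .trans B X
  have : Module.IsReflexive B X := .of_projective_dual (R := O)
  have hreg (M : Type) [AddCommGroup M] [Module O M] [Module B M] [IsScalarTower O B M]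
      [Module.IsTorsionFree O M] : ∀ a ∈ Algebra.algebraMapSubmonoid B (nonZeroDivisors O),
      IsSMulRegular M a := fun _ => isSMulRegular_of_mem_algebraMapSubmonoid M
  obtain ⟨⟨b, s⟩, rfl⟩ := IsLocalization.mk'_surjective
    (Algebra.algebraMapSubmonoid B (nonZeroDivisors O)) e
  refine ⟨Module.bijective_dual_eval B X, dualMapE_injective _, ?_⟩
  ext f
  rw [range_dualMapE, ker_eTensor_mk' (hreg X), SetLike.mem_coe,
    Submodule.mem_dualAnnihilator_torsionBy_iff
      (mul_self_eq_mul_of_isIdempotentElem_mk' (hreg B) he) (hreg B s s.2),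
    SetLike.mem_coe, mem_supE_mk'_iff (hreg _)]
end
end

section
/- Let ρ : M → N be a homomorphism of finitely generated 𝒜-modules, let r ≥ 0, and suppose there exist elements f_1, …, f_r of M such that the images 1⊗ρ(f_1), …, 1⊗ρ(f_r) in ℚ ⊗_ℤ N are linearly independent over A (i.e. they form an A-basis of a free A-submodule of rank r). Then for every r-tuple φ_1, …, φ_r of elements of M and every positive integer n, there exist elements φ'_1, …, φ'_r of M such that (a) φ'_i − φ_i ∈ n·M for all i, and (b) the 𝒜-submodule of N generated by ρ(φ'_1), …, ρ(φ'_r) is a free 𝒜-module of rank r. -/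
/-!
Take `φ' i = φ i + c • f i` with `c ∈ nℤ`, and write `x i`, `y i` for the images of `φ i`, `f i`
in `ℚ ⊗ N`. Since `A` is semisimple, the injection `A^r → ℚ ⊗ N`, `a ↦ ∑ a i • y i`, has an
`A`-linear retraction `L`; applying it turns a relation `∑ a i • (x i + c • y i) = 0` into
`T a + c • a = 0` for the fixed endomorphism `T = L ∘ (a ↦ ∑ a i • x i)` of the finite-dimensional
`ℚ`-space `A^r`. Hence the `φ' i` have `A`-independent images unless `-c` is one of the finitely
many eigenvalues of `T`, and independence over `A` in `ℚ ⊗ N` gives independence over `𝒜` in `N`.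
-/

open Function

theorem LinearMap.exists_leftInverse_of_injective_of_isSemisimpleModule {A E F : Type*} [Ring A]
    [AddCommGroup E] [Module A E] [AddCommGroup F] [Module A F] [IsSemisimpleModule A F]
    {Y : E →ₗ[A] F} (hY : Injective Y) : ∃ L : F →ₗ[A] E, L ∘ₗ Y = LinearMap.id := by
  obtain ⟨q, hq⟩ := exists_isCompl (LinearMap.range Y)
  refine ⟨(LinearEquiv.ofInjective Y hY).symm.toLinearMap ∘ₗ (range Y).projectionOnto q hq, ?_⟩
  ext v
  rw [LinearMap.comp_apply, LinearMap.comp_apply,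
    Submodule.projectionOnto_apply_of_mem_left hq (LinearMap.mem_range_self Y v)]
  exact (LinearEquiv.ofInjective Y hY).symm_apply_apply v

theorem finite_setOf_not_injective_add_zsmul (K : Type*) {A E F : Type*} [Field K] [CharZero K]
    [Ring A] [Algebra K A] [AddCommGroup E] [Module A E] [Module K E] [IsScalarTower K A E]
    [FiniteDimensional K E] [AddCommGroup F] [Module A F] (X : E →ₗ[A] F) {Y : E →ₗ[A] F}
    {L : F →ₗ[A] E} (hL : L ∘ₗ Y = LinearMap.id) : {c : ℤ | ¬Injective (X + c • Y)}.Finite := by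
  let T : Module.End K E := (L ∘ₗ X).restrictScalars K
  have hT_eigen : ∀ (c : ℤ) v, X v + c • Y v = 0 → T v = ((-c : ℤ) : K) • v := by
    intro c v h
    have := congrArg L h
    rw [map_add, map_zsmul, ← LinearMap.comp_apply L Y, hL, map_zero, LinearMap.id_apply,
      add_eq_zero_iff_eq_neg, ← neg_smul] at this
    simpa [T, Int.cast_smul_eq_zsmul] using this
  refine (T.finite_hasEigenvalue.preimage (f := fun c : ℤ => ((-c : ℤ) : K))
    (Int.cast_injective.comp neg_injective).injOn).subset fun c hc => ?_
  obtain ⟨v, hv, hv0⟩ : ∃ v, X v + c • Y v = 0 ∧ v ≠ 0 := by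
    simpa [injective_iff_map_eq_zero] using hc
  exact Module.End.hasEigenvalue_of_hasEigenvector
    ⟨Module.End.mem_eigenspace_iff.mpr (hT_eigen c v hv), hv0⟩

theorem exists_linearIndependent_add_mul_zsmul (K : Type*) {A F ι : Type*} [Field K] [CharZero K]
    [Ring A] [Algebra K A] [FiniteDimensional K A] [AddCommGroup F] [Module A F]
    [IsSemisimpleModule A F] [Fintype ι] (x : ι → F) {y : ι → F} (hy : LinearIndependent A y)
    {n : ℤ} (hn : n ≠ 0) : ∃ t : ℤ, LinearIndependent A fun i => x i + (n * t) • y i := by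
  set X := Fintype.linearCombination A x
  set Y := Fintype.linearCombination A y
  obtain ⟨L, hL⟩ := LinearMap.exists_leftInverse_of_injective_of_isSemisimpleModule
    (linearIndependent_iff_injective_fintypeLinearCombination.mp hy)
  have hfin := (finite_setOf_not_injective_add_zsmul K X hL).preimage
    (mul_right_injective₀ hn).injOn
  obtain ⟨t, ht⟩ := hfin.infinite_compl.nonempty
  have hinj : Injective (X + (n * t) • Y) := not_not.mp ht
  have hcomb : Fintype.linearCombination A (fun i => x i + (n * t) • y i) = X + (n * t) • Y := by
    ext a
    simp [X, Y, Fintype.linearCombination_apply, smul_add, Finset.sum_add_distrib,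
      smul_comm _ (n * t), Finset.smul_sum]
  exact ⟨t, linearIndependent_iff_injective_fintypeLinearCombination.mpr (hcomb ▸ hinj)⟩

theorem LinearIndependent.of_comp_of_map_smul {R A N V ι : Type*} [CommRing R] [Ring A]
    [Algebra R A] {S : Subalgebra R A} [AddCommGroup N] [Module S N] [AddCommGroup V] [Module A V]
    (j : N →+ V) (hj : ∀ (b : S) (x : N), j (b • x) = (b : A) • j x) {v : ι → N}
    (hv : LinearIndependent A fun i => j (v i)) : LinearIndependent S v :=
  LinearIndependent.of_comp { j with map_smul' := hj } (hv.restrict_scalars' S)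

noncomputable section

variable (A : Type) [Ring A] [Algebra ℚ A] [FiniteDimensional ℚ A] [IsSemisimpleRing A]
variable (𝒜 : Subalgebra ℤ A) [Module.Finite ℤ ↥𝒜]
variable (M N : Type) [AddCommGroup M] [Module ↥𝒜 M] [Module.Finite ↥𝒜 M]
  [AddCommGroup N] [Module ↥𝒜 N] [Module.Finite ↥𝒜 N]
variable (ρ : M →ₗ[↥𝒜] N)
-- `V` plays the role of `ℚ ⊗_ℤ N`, via the localization map `j`:
variable (V : Type) [AddCommGroup V] [Module A V]
variable (j : N →ₗ[ℤ] V) [IsLocalizedModule (nonZeroDivisors ℤ) j]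

theorem exists_approximation_with_free_span
    -- compatibility of `j` with the `𝒜`-module structures:
    (hj : ∀ (b : ↥𝒜) (x : N), j (b • x) = (b : A) • j x)
    (r : ℕ) (f : Fin r → M)
    (hLI : LinearIndependent A fun i => j (ρ (f i)))
    (φ : Fin r → M) (n : ℕ) (hn : 0 < n) :
    ∃ φ' : Fin r → M,
      (∀ i, ∃ m : M, φ' i - φ i = (n : ℤ) • m) ∧
        Nonempty
          (Module.Basis (Fin r) ↥𝒜
            ↥(Submodule.span ↥𝒜 (Set.range fun i => ρ (φ' i)))) := by
  obtain ⟨t, ht⟩ := exists_linearIndependent_add_mul_zsmul ℚ (fun i => j (ρ (φ i))) hLI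
    (Int.natCast_ne_zero.mpr hn.ne')
  refine ⟨fun i => φ i + ((n : ℤ) * t) • f i, fun i => ⟨t • f i, by simp [mul_smul]⟩,
    ⟨.span (LinearIndependent.of_comp_of_map_smul j.toAddMonoidHom hj ?_)⟩⟩
  simpa using ht

end
end
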